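/- arXiv:2110.15590 — 2 statements merged into one kernel-verified Lean document; each statement's English description precedes it below -/
import Mathlib

section
/- Let f and q be probability density functions on ℝ^d, let η ∈ (0,1], and set q̃ = f^η q^{1−η}. Then, with KL the generalized Kullback–Leibler divergence KL(f‖g) = ∫ f log(f/g) + ∫ g − ∫ f, one has KL(f ‖ q̃) ≤ (1−η) KL(f ‖ q). -/
open MeasureTheory Real

/-- Generalized Kullback–Leibler divergence for (possibly unnormalized) densities. -/
noncomputable def KLgen {d : ℕ} (f g : (Fin d → ℝ) → ℝ) : ℝ :=
  (∫ x, f x * Real.log (f x / g x)) + (∫ x, g x) - ∫ x, f x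

/-- One-step contraction: `KL(f ‖ f^η q^{1−η}) ≤ (1−η) KL(f ‖ q)`. -/
theorem stmt_5 {d : ℕ} (f q : (Fin d → ℝ) → ℝ)
    (hf0 : ∀ x, 0 ≤ f x) (hf1 : ∫ x, f x = 1) (hfint : Integrable f)
    (hq0 : ∀ x, 0 ≤ q x) (hq1 : ∫ x, q x = 1) (hqint : Integrable q)
    (η : ℝ) (hη0 : 0 < η) (hη1 : η ≤ 1)
    (hlogint : Integrable (fun x => f x * Real.log (f x / q x)))
    (htilde : Integrable (fun x => f x ^ η * q x ^ (1 - η))) :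
    KLgen f (fun x => f x ^ η * q x ^ (1 - η)) ≤ (1 - η) * KLgen f q := by
  have hη1' : 0 ≤ 1 - η := by linarith
  -- pointwise log identity
  have hpt : ∀ x, f x * Real.log (f x / (f x ^ η * q x ^ (1 - η)))
      = (1 - η) * (f x * Real.log (f x / q x)) := by
    intro x
    rcases eq_or_lt_of_le (hf0 x) with hf | hf
    · simp [← hf]
    rcases eq_or_lt_of_le (hq0 x) with hq | hq
    · rcases eq_or_lt_of_le hη1 with h1 | h1
      · rw [h1]; simp [Real.rpow_one, div_self (ne_of_gt hf)]
      · have : q x ^ (1 - η) = 0 := by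
          rw [← hq]; exact Real.zero_rpow (by linarith)
        rw [this, mul_zero, div_zero, Real.log_zero, mul_zero, ← hq, div_zero,
            Real.log_zero, mul_zero, mul_zero]
    · have hfη : f x ^ η > 0 := Real.rpow_pos_of_pos hf η
      have hq1η : q x ^ (1 - η) > 0 := Real.rpow_pos_of_pos hq _
      rw [Real.log_div (ne_of_gt hf) (by positivity),
          Real.log_mul (ne_of_gt hfη) (ne_of_gt hq1η),
          Real.log_rpow hf, Real.log_rpow hq,
          Real.log_div (ne_of_gt hf) (ne_of_gt hq)]
      ring
  -- integral of tilde ≤ 1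
  have hJ : (∫ x, f x ^ η * q x ^ (1 - η)) ≤ 1 := by
    have hmono : (∫ x, f x ^ η * q x ^ (1 - η)) ≤ ∫ x, η * f x + (1 - η) * q x := by
      refine integral_mono htilde ((hfint.const_mul η).add (hqint.const_mul (1 - η))) ?_
      intro x
      exact Real.geom_mean_le_arith_mean2_weighted hη0.le hη1' (hf0 x) (hq0 x) (by ring)
    have : (∫ x, η * f x + (1 - η) * q x) = 1 := by
      rw [integral_add (hfint.const_mul η) (hqint.const_mul (1 - η)),
          integral_const_mul, integral_const_mul, hf1, hq1]
      ring
    linarith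
  have hI : (∫ x, f x * Real.log (f x / (f x ^ η * q x ^ (1 - η))))
      = (1 - η) * ∫ x, f x * Real.log (f x / q x) := by
    rw [← integral_const_mul]
    exact integral_congr_ae (Filter.Eventually.of_forall hpt)
  simp only [KLgen, hI, hf1, hq1]
  linarith
end

section
/- Let f and q be probability densities on ℝ^d, η ∈ (0,1], and let q' be the probability density proportional to f^η q^{1−η} (assuming 0 < ∫ f^η q^{1−η} < ∞). Then KL(f ‖ q') ≤ (1−η) KL(f ‖ q), where KL(f‖g) = ∫ f log(f/g) for probability densities f, g. -/
open MeasureTheory Real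

/-- Entropic mirror descent step contracts the KL divergence to the target. -/
theorem stmt_6 {d : ℕ} (f q : (Fin d → ℝ) → ℝ)
    (hf0 : ∀ x, 0 ≤ f x) (hf1 : ∫ x, f x = 1) (hfint : Integrable f)
    (hq0 : ∀ x, 0 ≤ q x) (hq1 : ∫ x, q x = 1) (hqint : Integrable q)
    (η : ℝ) (hη0 : 0 < η) (hη1 : η ≤ 1)
    (htilde : Integrable (fun x => f x ^ η * q x ^ (1 - η)))
    (hZpos : 0 < ∫ x, f x ^ η * q x ^ (1 - η))
    (q' : (Fin d → ℝ) → ℝ)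
    (hq' : ∀ x, q' x = f x ^ η * q x ^ (1 - η) / ∫ y, f y ^ η * q y ^ (1 - η)) :
    ∫ x, f x * Real.log (f x / q' x) ≤ (1 - η) * ∫ x, f x * Real.log (f x / q x) := by
  set Z := ∫ y, f y ^ η * q y ^ (1 - η) with hZdef
  -- Z ≤ 1 by weighted AM-GM
  have hZ1 : Z ≤ 1 := by
    have hmono : ∀ x, f x ^ η * q x ^ (1 - η) ≤ η * f x + (1 - η) * q x := fun x =>
      Real.geom_mean_le_arith_mean2_weighted hη0.le (by linarith) (hf0 x) (hq0 x) (by ring)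
    have hint2 : Integrable (fun x => η * f x + (1 - η) * q x) :=
      (hfint.const_mul η).add (hqint.const_mul (1 - η))
    calc Z ≤ ∫ x, (η * f x + (1 - η) * q x) := integral_mono htilde hint2 hmono
      _ = 1 := by
        rw [integral_add (hfint.const_mul η) (hqint.const_mul (1 - η)),
          integral_const_mul, integral_const_mul, hf1, hq1]; ring
  have hlogZ : Real.log Z ≤ 0 := Real.log_nonpos hZpos.le hZ1
  rcases eq_or_lt_of_le hη1 with hη | hη
  · -- η = 1 : q' = f and both sides vanish
    subst hη
    have hZeq : Z = 1 := by
      rw [hZdef]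
      simpa [Real.rpow_one] using hf1
    have hq'' : ∀ x, q' x = f x := by
      intro x
      rw [hq' x, hZeq]
      simp [Real.rpow_one]
    have hzero : ∀ x, f x * Real.log (f x / q' x) = 0 := by
      intro x
      rw [hq'' x]
      rcases eq_or_ne (f x) 0 with h | h
      · simp [h]
      · rw [div_self h]; simp
    have : (∫ x, f x * Real.log (f x / q' x)) = 0 := by simp [hzero]
    rw [this]
    norm_num
  · -- η < 1
    have hne : (1 : ℝ) - η ≠ 0 := by linarith
    set h := fun x => f x * Real.log (f x / q x) with hh
    set c := fun x => if q x = 0 then 0 else f x * Real.log Z with hc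
    -- pointwise decomposition
    have key : ∀ x, f x * Real.log (f x / q' x) = (1 - η) * h x + c x := by
      intro x
      rcases eq_or_lt_of_le (hf0 x) with hfx | hfx
      · have hfx0 : f x = 0 := hfx.symm
        simp [h, c, hfx0]
      · rcases eq_or_ne (q x) 0 with hqx | hqx
        · have h1 : q x ^ (1 - η) = 0 := by rw [hqx]; exact Real.zero_rpow hne
          have h2 : q' x = 0 := by rw [hq' x, h1]; simp
          simp [h, c, h2, hqx]
        · have hqx' : 0 < q x := lt_of_le_of_ne (hq0 x) (Ne.symm hqx)
          have hfη : (0:ℝ) < f x ^ η := Real.rpow_pos_of_pos hfx η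
          have hqη : (0:ℝ) < q x ^ (1 - η) := Real.rpow_pos_of_pos hqx' _
          have hlog : Real.log (f x / q' x)
              = (1 - η) * Real.log (f x / q x) + Real.log Z := by
            rw [hq' x, div_div_eq_mul_div,
              Real.log_div (by positivity) (by positivity),
              Real.log_mul hfx.ne' hZpos.ne', Real.log_mul hfη.ne' hqη.ne',
              Real.log_rpow hfx, Real.log_rpow hqx',
              Real.log_div hfx.ne' hqx]
            ring
          rw [hlog]
          simp only [h, c, if_neg hqx]
          ring
    -- integrability of c
    have cint : Integrable c := by
      have hfm := hfint.aestronglyMeasurable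
      have hqm := hqint.aestronglyMeasurable
      refine Integrable.mono' (g := fun x => f x * |Real.log Z|)
        (hfint.mul_const _) ?_ ?_
      · have hsm : StronglyMeasurable
            (fun x => if hqm.mk q x = 0 then 0 else hfm.mk f x * Real.log Z) := by
          refine Measurable.stronglyMeasurable ?_
          exact Measurable.ite (hqm.measurable_mk (measurableSet_singleton 0))
            measurable_const (hfm.measurable_mk.mul_const _)
        refine hsm.aestronglyMeasurable.congr ?_
        filter_upwards [hqm.ae_eq_mk, hfm.ae_eq_mk] with x h1 h2
        simp only [c, ← h1, ← h2]
      · refine Filter.Eventually.of_forall fun x => ?_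
        simp only [c]
        split
        · simpa using mul_nonneg (hf0 x) (abs_nonneg _)
        · rw [norm_mul, Real.norm_eq_abs, Real.norm_eq_abs, abs_of_nonneg (hf0 x)]
    have cnonpos : ∀ x, c x ≤ 0 := by
      intro x
      simp only [c]
      split
      · exact le_refl 0
      · exact mul_nonpos_of_nonneg_of_nonpos (hf0 x) hlogZ
    by_cases hhint : Integrable h
    · have heq : (∫ x, f x * Real.log (f x / q' x))
          = (1 - η) * (∫ x, h x) + ∫ x, c x := by
        simp only [key]
        rw [integral_add (hhint.const_mul _) cint, integral_const_mul]
      rw [heq]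
      have hcle : (∫ x, c x) ≤ 0 := integral_nonpos cnonpos
      linarith
    · have h0 : (∫ x, h x) = 0 := integral_undef hhint
      have gnint : ¬ Integrable (fun x => f x * Real.log (f x / q' x)) := by
        intro hg
        have h1 : Integrable (fun x => (1 - η) * h x) := by
          have h2 := hg.sub cint
          have h3 : ((fun x => f x * Real.log (f x / q' x)) - c)
              = fun x => (1 - η) * h x := by
            funext x
            show f x * Real.log (f x / q' x) - c x = _
            rw [key x]; ring
          rwa [h3] at h2
        have h4 : Integrable h := by
          have h5 := h1.const_mul ((1 - η)⁻¹)
          have h6 : (fun x => (1 - η)⁻¹ * ((1 - η) * h x)) = h := by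
            funext x; field_simp
          rwa [h6] at h5
        exact hhint h4
      rw [integral_undef gnint, h0]
      norm_num
end
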